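/- arXiv:2506.05406 — 2 statements merged into one kernel-verified Lean document; each statement's English description precedes it below -/
import Mathlib

section
/- For radial u ∈ Ḣ¹(ℝ^d), d ≥ 3, and any R ≥ 0: ∫_{|x|>R} |u|^{2d/(d−2)} dx ≲ ‖u/r‖_{L²(|x|>R)}^{(2d−2)/(d−2)} · ‖∇u‖_{L²(|x|>R)}^{2/(d−2)}. -/
/-!
Passing to polar coordinates reduces everything to the radial profile `φ r = u (r • e)`,
`‖e‖ = 1`. Writing `‖φ r‖² = -∫_r^∞ (‖φ‖²)'`, inserting `(s / r) ^ (d - 2) ≥ 1` and applying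
Cauchy–Schwarz for the measure `s ^ (d - 1) ds` gives the Strauss bound
`r ^ (d - 2) ‖u‖² ≲ ‖u / r‖₂ ‖∇u‖₂` on `{R < |x|}`. Then
`|u| ^ (2d / (d - 2)) = (|u| / r)² · (r ^ (d - 2) |u|²) ^ (2 / (d - 2))`, and integrating the
Strauss bound against `(|u| / r)²` gives the estimate.
-/

open MeasureTheory Filter Set Metric Topology Bornology

local notation "dim" => Module.finrank ℝ

lemma indicator_norm_gt_comp_norm {E F : Type*} [Norm E] [Zero F] (f : ℝ → F) (R : ℝ) :
    {x : E | R < ‖x‖}.indicator (fun x => f ‖x‖) = fun x => (Ioi R).indicator f ‖x‖ := by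
  ext x; by_cases hx : R < ‖x‖ <;> simp [indicator, hx]

section Polar

variable {E F : Type*} [NormedAddCommGroup E] [NormedSpace ℝ E] [MeasurableSpace E] [BorelSpace E]
  [Nontrivial E] [FiniteDimensional ℝ E] (μ : Measure E) [μ.IsAddHaarMeasure]
  [NormedAddCommGroup F] [NormedSpace ℝ F]

lemma integrableOn_norm_gt_iff {f : ℝ → F} {R : ℝ} (hR : 0 ≤ R) :
    IntegrableOn (fun x : E => f ‖x‖) {x | R < ‖x‖} μ ↔
      IntegrableOn (fun y => y ^ (dim E - 1) • f y) (Ioi R) := by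
  rw [← integrable_indicator_iff (measurableSet_lt measurable_const measurable_norm),
    indicator_norm_gt_comp_norm, integrable_fun_norm_addHaar μ,
    integrableOn_congr_fun (g := (Ioi R).indicator fun y => y ^ (dim E - 1) • f y) _
      measurableSet_Ioi, IntegrableOn, integrable_indicator_iff measurableSet_Ioi,
    IntegrableOn, Measure.restrict_restrict measurableSet_Ioi, Ioi_inter_Ioi, max_eq_left hR,
    IntegrableOn]
  intro y _
  by_cases hy : R < y <;> simp [indicator, hy]

lemma setIntegral_norm_gt_eq {R : ℝ} (hR : 0 ≤ R) (f : ℝ → F) :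
    ∫ x in {x | R < ‖x‖}, f ‖x‖ ∂μ
      = dim E • μ.real (ball 0 1) • ∫ y in Ioi R, y ^ (dim E - 1) • f y := by
  rw [← integral_indicator (measurableSet_lt measurable_const measurable_norm),
    indicator_norm_gt_comp_norm, integral_fun_norm_addHaar μ,
    setIntegral_congr_fun (g := (Ioi R).indicator fun y => y ^ (dim E - 1) • f y)
      measurableSet_Ioi, integral_indicator measurableSet_Ioi,
    Measure.restrict_restrict measurableSet_Ioi, Ioi_inter_Ioi, max_eq_left hR]
  intro y _
  by_cases hy : R < y <;> simp [indicator, hy]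

end Polar

lemma norm_fderiv_eq_of_norm_eq {E F : Type*} [NormedAddCommGroup E] [InnerProductSpace ℝ E]
    [NormedAddCommGroup F] [NormedSpace ℝ F] {u : E → F} (hu : Differentiable ℝ u)
    (hrad : ∀ x y : E, ‖x‖ = ‖y‖ → u x = u y) {x y : E} (h : ‖x‖ = ‖y‖) :
    ‖fderiv ℝ u x‖ = ‖fderiv ℝ u y‖ := by
  set Q : E ≃ₗᵢ[ℝ] E := (ℝ ∙ (x - y))ᗮ.reflection
  have hQ : Q x = y := Submodule.reflection_sub h
  have hcomp : u ∘ Q = u := funext fun z => hrad _ _ (Q.norm_map z)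
  have hderiv := (hu (Q x)).hasFDerivAt.comp x Q.toContinuousLinearEquiv.hasFDerivAt
  rw [hcomp, hQ] at hderiv
  rw [hderiv.fderiv]
  exact (fderiv ℝ u y).opNorm_comp_linearIsometryEquiv Q

lemma integral_mul_le_sqrt_mul_sqrt {α : Type*} [MeasurableSpace α] {μ : Measure α}
    {f g : α → ℝ} (hf0 : 0 ≤ᵐ[μ] f) (hg0 : 0 ≤ᵐ[μ] g) (hf : MemLp f 2 μ) (hg : MemLp g 2 μ) :
    ∫ a, f a * g a ∂μ ≤ √(∫ a, f a ^ 2 ∂μ) * √(∫ a, g a ^ 2 ∂μ) := by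
  have h2 : ENNReal.ofReal 2 = 2 := by norm_num
  have := integral_mul_le_Lp_mul_Lq_of_nonneg Real.HolderConjugate.two_two hf0 hg0
    (h2 ▸ hf) (h2 ▸ hg)
  simpa [Real.sqrt_eq_rpow] using this

section Profile

variable {F : Type*} [NormedAddCommGroup F] [InnerProductSpace ℝ F]
  {φ ψ : ℝ → F} {b : ℝ → ℝ}

lemma sq_norm_le_two_mul_integral_Ioi (hφ : ∀ s, HasDerivAt φ (ψ s) s)
    (hψb : ∀ s, ‖ψ s‖ ≤ b s) (hlim : Tendsto (fun s => ‖φ s‖) atTop (𝓝 0)) {r : ℝ}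
    (hint : IntegrableOn (fun s => ‖φ s‖ * b s) (Ioi r)) :
    ‖φ r‖ ^ 2 ≤ 2 * ∫ s in Ioi r, ‖φ s‖ * b s := by
  have hderiv : ∀ s, HasDerivAt (fun t => ‖φ t‖ ^ 2) (2 * inner ℝ (φ s) (ψ s)) s :=
    fun s => (hφ s).norm_sq
  have hbound : ∀ s, |2 * inner ℝ (φ s) (ψ s)| ≤ 2 * (‖φ s‖ * b s) := fun s => by
    rw [abs_mul, abs_two]
    gcongr
    exact (abs_real_inner_le_norm _ _).trans (by gcongr; exact hψb s)
  have hmeas : Measurable fun s => 2 * inner ℝ (φ s) (ψ s) := by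
    rw [← funext fun s => (hderiv s).deriv]
    exact measurable_deriv _
  have hint' : IntegrableOn (fun s => 2 * inner ℝ (φ s) (ψ s)) (Ioi r) :=
    (hint.const_mul 2).mono' hmeas.aestronglyMeasurable
      (ae_of_all _ fun s => (Real.norm_eq_abs _).trans_le (hbound s))
  have hftc : ∫ s in Ioi r, 2 * inner ℝ (φ s) (ψ s) = 0 - ‖φ r‖ ^ 2 :=
    integral_Ioi_of_hasDerivAt_of_tendsto' (fun s _ => hderiv s) hint'
      (by simpa using hlim.pow 2)
  calc ‖φ r‖ ^ 2 = ∫ s in Ioi r, -(2 * inner ℝ (φ s) (ψ s)) := by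
        rw [integral_neg, hftc, zero_sub, neg_neg]
    _ ≤ ∫ s in Ioi r, 2 * (‖φ s‖ * b s) :=
        integral_mono hint'.neg (hint.const_mul 2) fun s => (neg_le_abs _).trans (hbound s)
    _ = 2 * ∫ s in Ioi r, ‖φ s‖ * b s := integral_const_mul _ _

lemma pow_mul_sq_norm_le_of_hasDerivAt (k : ℕ) {R r : ℝ} (hR : 0 ≤ R) (hr : R < r)
    (hφ : ∀ s, HasDerivAt φ (ψ s) s) (hψb : ∀ s, ‖ψ s‖ ≤ b s)
    (hlim : Tendsto (fun s => ‖φ s‖) atTop (𝓝 0))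
    (hφint : IntegrableOn (fun s => s ^ (k + 1) * (‖φ s‖ ^ 2 / s ^ 2)) (Ioi R))
    (hbint : IntegrableOn (fun s => s ^ (k + 1) * b s ^ 2) (Ioi R)) :
    r ^ k * ‖φ r‖ ^ 2 ≤ 2 * √(∫ s in Ioi R, s ^ (k + 1) * (‖φ s‖ ^ 2 / s ^ 2))
      * √(∫ s in Ioi R, s ^ (k + 1) * b s ^ 2) := by
  have hr0 : 0 < r := hR.trans_lt hr
  have hb0 : ∀ s, 0 ≤ b s := fun s => (norm_nonneg _).trans (hψb s)
  have hφ0 : ∀ s, 0 ≤ s → 0 ≤ s ^ (k + 1) * (‖φ s‖ ^ 2 / s ^ 2) := fun s hs => by positivity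
  have hb0' : ∀ s, 0 ≤ s → 0 ≤ s ^ (k + 1) * b s ^ 2 := fun s hs => by positivity
  -- Cauchy–Schwarz factors, written as square roots of the integrands so that their
  -- measurability comes from `hφint` and `hbint`
  set f : ℝ → ℝ := fun s => √(s ^ (k + 1) * (‖φ s‖ ^ 2 / s ^ 2))
  set g : ℝ → ℝ := fun s => √(s ^ (k + 1) * b s ^ 2)
  have hfg : ∀ s, 0 < s → f s * g s = s ^ k * (‖φ s‖ * b s) := fun s hs => by
    have hsq : s ^ (k + 1) * (‖φ s‖ ^ 2 / s ^ 2) * (s ^ (k + 1) * b s ^ 2)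
        = (s ^ k * (‖φ s‖ * b s)) ^ 2 := by
      field_simp
      ring
    rw [← Real.sqrt_mul (hφ0 s hs.le), hsq, Real.sqrt_sq (by have := hb0 s; positivity)]
  have hf2 : EqOn (fun s => f s ^ 2) (fun s => s ^ (k + 1) * (‖φ s‖ ^ 2 / s ^ 2)) (Ioi R) :=
    fun s hs => Real.sq_sqrt (hφ0 s (hR.trans hs.out.le))
  have hg2 : EqOn (fun s => g s ^ 2) (fun s => s ^ (k + 1) * b s ^ 2) (Ioi R) :=
    fun s hs => Real.sq_sqrt (hb0' s (hR.trans hs.out.le))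
  have hf : MemLp f 2 (volume.restrict (Ioi R)) :=
    (memLp_two_iff_integrable_sq hφint.aemeasurable.sqrt.aestronglyMeasurable).2
      ((integrableOn_congr_fun hf2 measurableSet_Ioi).2 hφint)
  have hg : MemLp g 2 (volume.restrict (Ioi R)) :=
    (memLp_two_iff_integrable_sq hbint.aemeasurable.sqrt.aestronglyMeasurable).2
      ((integrableOn_congr_fun hg2 measurableSet_Ioi).2 hbint)
  have hfgint : IntegrableOn (fun s => f s * g s) (Ioi R) := hf.integrable_mul hg
  have hfgint_r : IntegrableOn (fun s => f s * g s) (Ioi r) :=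
    hfgint.mono_set (Ioi_subset_Ioi hr.le)
  have hCS : ∫ s in Ioi R, f s * g s ≤ √(∫ s in Ioi R, s ^ (k + 1) * (‖φ s‖ ^ 2 / s ^ 2))
      * √(∫ s in Ioi R, s ^ (k + 1) * b s ^ 2) := by
    have := integral_mul_le_sqrt_mul_sqrt (ae_of_all _ fun s => Real.sqrt_nonneg _)
      (ae_of_all _ fun s => Real.sqrt_nonneg _) hf hg
    rwa [setIntegral_congr_fun measurableSet_Ioi hf2,
      setIntegral_congr_fun measurableSet_Ioi hg2] at this
  have hpt : ∀ s ∈ Ioi r, r ^ k * (‖φ s‖ * b s) ≤ f s * g s := fun s hs => by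
    rw [hfg s (hr0.trans hs)]
    gcongr
    · exact mul_nonneg (norm_nonneg _) (hb0 s)
    · exact hs.out.le
  have hint : IntegrableOn (fun s => ‖φ s‖ * b s) (Ioi r) := by
    refine (hfgint_r.const_mul (r ^ k)⁻¹).mono' ?_
      (ae_restrict_of_forall_mem measurableSet_Ioi fun s hs => ?_)
    · refine ((measurable_id.pow_const k).inv.aestronglyMeasurable.mul
        hfgint_r.aestronglyMeasurable).congr ?_
      filter_upwards [ae_restrict_mem measurableSet_Ioi] with s hs
      show (s ^ k)⁻¹ * (f s * g s) = _
      rw [hfg s (hr0.trans hs), inv_mul_cancel_left₀ (pow_pos (hr0.trans hs) k).ne']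
    · rw [Real.norm_of_nonneg (mul_nonneg (norm_nonneg _) (hb0 s)),
        le_inv_mul_iff₀ (pow_pos hr0 k)]
      exact hpt s hs
  calc r ^ k * ‖φ r‖ ^ 2 ≤ r ^ k * (2 * ∫ s in Ioi r, ‖φ s‖ * b s) := by
        gcongr
        exact sq_norm_le_two_mul_integral_Ioi hφ hψb hlim hint
    _ = 2 * ∫ s in Ioi r, r ^ k * (‖φ s‖ * b s) := by rw [integral_const_mul]; ring
    _ ≤ 2 * ∫ s in Ioi r, f s * g s := by
        gcongr 2 * ?_
        exact setIntegral_mono_on (hint.const_mul _) hfgint_r measurableSet_Ioi hpt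
    _ ≤ 2 * ∫ s in Ioi R, f s * g s := by
        gcongr 2 * ?_
        exact setIntegral_mono_set hfgint (ae_of_all _ fun s => by positivity)
          (Ioi_subset_Ioi hr.le).eventuallyLE
    _ ≤ _ := by rw [mul_assoc]; gcongr

end Profile

section Radial

variable {E F : Type*} [NormedAddCommGroup E] [InnerProductSpace ℝ E] [FiniteDimensional ℝ E]
  [MeasurableSpace E] [BorelSpace E] [Nontrivial E] (μ : Measure E) [μ.IsAddHaarMeasure]
  [NormedAddCommGroup F] [InnerProductSpace ℝ F]

lemma pow_mul_sq_norm_le_of_radial (hE : 2 ≤ dim E) {u : E → F} (hu : Differentiable ℝ u)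
    (hrad : ∀ x y : E, ‖x‖ = ‖y‖ → u x = u y) (hlim : Tendsto u (cobounded E) (𝓝 0))
    {R : ℝ} (hR : 0 ≤ R)
    (hDu : IntegrableOn (fun y => ‖fderiv ℝ u y‖ ^ 2) {y | R < ‖y‖} μ)
    (hu_div : IntegrableOn (fun y => ‖u y‖ ^ 2 / ‖y‖ ^ 2) {y | R < ‖y‖} μ)
    {x : E} (hx : R < ‖x‖) :
    dim E * μ.real (ball 0 1) * (‖x‖ ^ (dim E - 2) * ‖u x‖ ^ 2)
      ≤ 2 * √(∫ y in {y | R < ‖y‖}, ‖u y‖ ^ 2 / ‖y‖ ^ 2 ∂μ)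
        * √(∫ y in {y | R < ‖y‖}, ‖fderiv ℝ u y‖ ^ 2 ∂μ) := by
  obtain ⟨k, hk⟩ : ∃ k, dim E = k + 2 := ⟨dim E - 2, by omega⟩
  obtain ⟨e, he⟩ := exists_norm_eq E zero_le_one
  have hnorm : ∀ s : ℝ, 0 ≤ s → ‖s • e‖ = s := fun s hs => by
    rw [norm_smul, he, mul_one, Real.norm_of_nonneg hs]
  set φ : ℝ → F := fun s => u (s • e)
  have hux : ∀ y, u y = φ ‖y‖ := fun y => hrad _ _ (hnorm _ (norm_nonneg y)).symm
  have hDux : ∀ y, ‖fderiv ℝ u y‖ = ‖fderiv ℝ u (‖y‖ • e)‖ := fun y =>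
    norm_fderiv_eq_of_norm_eq hu hrad (hnorm _ (norm_nonneg y)).symm
  have hφ : ∀ s, HasDerivAt φ (fderiv ℝ u (s • e) e) s := fun s =>
    ((hu (s • e)).hasFDerivAt.comp_hasDerivAt s ((hasDerivAt_id s).smul_const e)).congr_deriv
      (by rw [one_smul])
  have hψb : ∀ s : ℝ, ‖fderiv ℝ u (s • e) e‖ ≤ ‖fderiv ℝ u (s • e)‖ := fun s => by
    simpa [he] using (fderiv ℝ u (s • e)).le_opNorm e
  have hφlim : Tendsto (fun s => ‖φ s‖) atTop (𝓝 0) := by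
    have hray : Tendsto (fun s : ℝ => s • e) atTop (cobounded E) := by
      rw [← tendsto_norm_atTop_iff_cobounded]
      exact tendsto_id.congr' (eventually_ge_atTop 0 |>.mono fun s hs => (hnorm s hs).symm)
    simpa using (hlim.comp hray).norm
  have hA : (fun y => ‖u y‖ ^ 2 / ‖y‖ ^ 2) = fun y => (fun s => ‖φ s‖ ^ 2 / s ^ 2) ‖y‖ :=
    funext fun y => by rw [hux]
  have hB : (fun y => ‖fderiv ℝ u y‖ ^ 2) = fun y => (fun s => ‖fderiv ℝ u (s • e)‖ ^ 2) ‖y‖ :=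
    funext fun y => by rw [hDux]
  have hφint := (integrableOn_norm_gt_iff μ hR (f := fun s => ‖φ s‖ ^ 2 / s ^ 2)).1
    (hA ▸ hu_div)
  have hDφint := (integrableOn_norm_gt_iff μ hR (f := fun s => ‖fderiv ℝ u (s • e)‖ ^ 2)).1
    (hB ▸ hDu)
  rw [hA, hB, setIntegral_norm_gt_eq μ hR (fun s => ‖φ s‖ ^ 2 / s ^ 2),
    setIntegral_norm_gt_eq μ hR (fun s => ‖fderiv ℝ u (s • e)‖ ^ 2), hux x]
  simp only [hk, show k + 2 - 1 = k + 1 by omega, Nat.add_sub_cancel, smul_eq_mul, nsmul_eq_mul]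
    at hφint hDφint ⊢
  have hprofile := pow_mul_sq_norm_le_of_hasDerivAt k hR hx hφ hψb hφlim hφint hDφint
  set c : ℝ := ((k + 2 : ℕ) : ℝ) * μ.real (ball 0 1)
  have hc : 0 ≤ c := by positivity
  calc c * (‖x‖ ^ k * ‖φ ‖x‖‖ ^ 2)
      ≤ c * (2 * √(∫ s in Ioi R, s ^ (k + 1) * (‖φ s‖ ^ 2 / s ^ 2))
          * √(∫ s in Ioi R, s ^ (k + 1) * ‖fderiv ℝ u (s • e)‖ ^ 2)) := by gcongr
    _ = _ := by
      rw [← mul_assoc (_ : ℝ) (μ.real _), ← mul_assoc (_ : ℝ) (μ.real _), Real.sqrt_mul hc,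
        Real.sqrt_mul hc]
      nth_rewrite 1 [← Real.mul_self_sqrt hc]
      ring

end Radial

lemma rpow_le_of_pow_mul_sq_le {p ρ K : ℝ} {k : ℕ} (hk : 0 < k) (hp : 0 ≤ p) (hρ : 0 < ρ)
    (h : ρ ^ k * p ^ 2 ≤ K) : p ^ (2 + 4 / (k : ℝ)) ≤ K ^ (2 / (k : ℝ)) * (p ^ 2 / ρ ^ 2) := by
  rcases hp.eq_or_lt with rfl | hp
  · rw [Real.zero_rpow (by positivity)]
    simp
  have hkt : (k : ℝ) * (2 / k) = 2 := by field_simp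
  have hρp : ρ ^ 2 * (p ^ 2) ^ (2 / (k : ℝ)) ≤ K ^ (2 / (k : ℝ)) := by
    calc ρ ^ 2 * (p ^ 2) ^ (2 / (k : ℝ)) = (ρ ^ k * p ^ 2) ^ (2 / (k : ℝ)) := by
          rw [Real.mul_rpow (by positivity) (by positivity), ← Real.rpow_natCast ρ k,
            ← Real.rpow_mul hρ.le, hkt, Real.rpow_two]
      _ ≤ K ^ (2 / (k : ℝ)) := Real.rpow_le_rpow (by positivity) h (by positivity)
  calc p ^ (2 + 4 / (k : ℝ)) = p ^ 2 * (p ^ 2) ^ (2 / (k : ℝ)) := by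
        rw [← Real.rpow_natCast p 2, ← Real.rpow_mul hp.le, ← Real.rpow_add hp]
        congr 1
        push_cast
        ring
    _ ≤ K ^ (2 / (k : ℝ)) * (p ^ 2 / ρ ^ 2) := by
        rw [mul_div_assoc', le_div_iff₀ (by positivity)]
        nlinarith [hρp, sq_nonneg p]

lemma setIntegral_rpow_le_of_pow_mul_sq_le {α F : Type*} [MeasurableSpace α]
    [NormedAddCommGroup F] {μ : Measure α} {S : Set α} (hS : MeasurableSet S) {v : α → F}
    {ρ : α → ℝ} {k : ℕ} (hk : 0 < k) {K : ℝ} (hρ : ∀ x ∈ S, 0 < ρ x)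
    (hK : ∀ x ∈ S, ρ x ^ k * ‖v x‖ ^ 2 ≤ K)
    (hint : IntegrableOn (fun x => ‖v x‖ ^ 2 / ρ x ^ 2) S μ) :
    ∫ x in S, ‖v x‖ ^ (2 + 4 / (k : ℝ)) ∂μ
      ≤ K ^ (2 / (k : ℝ)) * ∫ x in S, ‖v x‖ ^ 2 / ρ x ^ 2 ∂μ := by
  rw [← integral_const_mul]
  exact integral_mono_of_nonneg (ae_of_all _ fun x => by positivity) (hint.const_mul _)
    (ae_restrict_of_forall_mem hS fun x hx =>
      rpow_le_of_pow_mul_sq_le hk (norm_nonneg _) (hρ x hx) (hK x hx))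

/-- Exterior interpolation estimate: for radial `u ∈ Ḣ¹(ℝ^d)`, `d ≥ 3`, `R ≥ 0`:
`∫_{|x|>R} |u|^{2d/(d−2)} ≲ ‖u/r‖_{L²(|x|>R)}^{(2d−2)/(d−2)} ‖∇u‖_{L²(|x|>R)}^{2/(d−2)}`. -/
theorem stmt15 (d : ℕ) (hd : 3 ≤ d) :
    ∃ C : ℝ, 0 < C ∧
      ∀ (u : EuclideanSpace ℝ (Fin d) → ℂ) (R : ℝ), 0 ≤ R →
        Differentiable ℝ u →
        (∀ x y, ‖x‖ = ‖y‖ → u x = u y) →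
        Tendsto u (Bornology.cobounded (EuclideanSpace ℝ (Fin d))) (nhds 0) →
        IntegrableOn (fun y => ‖fderiv ℝ u y‖ ^ 2) {y | R < ‖y‖} →
        IntegrableOn (fun y => ‖u y‖ ^ 2 / ‖y‖ ^ 2) {y | R < ‖y‖} →
        (∫ x in {x | R < ‖x‖}, ‖u x‖ ^ (2 * (d : ℝ) / ((d : ℝ) - 2)))
          ≤ C * Real.sqrt (∫ y in {y | R < ‖y‖}, ‖u y‖ ^ 2 / ‖y‖ ^ 2)
                ^ ((2 * (d : ℝ) - 2) / ((d : ℝ) - 2))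
              * Real.sqrt (∫ y in {y | R < ‖y‖}, ‖fderiv ℝ u y‖ ^ 2)
                ^ ((2 : ℝ) / ((d : ℝ) - 2)) := by
  have : Nonempty (Fin d) := ⟨⟨0, by omega⟩⟩
  have hdim : dim (EuclideanSpace ℝ (Fin d)) = d := finrank_euclideanSpace_fin
  set c : ℝ := d * volume.real (ball (0 : EuclideanSpace ℝ (Fin d)) 1)
  have hc : 0 < c := mul_pos (by positivity)
    (ENNReal.toReal_pos (measure_ball_pos _ _ one_pos).ne' measure_ball_lt_top.ne)
  refine ⟨(2 / c) ^ (2 / ((d : ℝ) - 2)), by positivity, fun u R hR hu hrad hlim hDu hu_div => ?_⟩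
  set A := ∫ y in {y | R < ‖y‖}, ‖u y‖ ^ 2 / ‖y‖ ^ 2
  set B := ∫ y in {y | R < ‖y‖}, ‖fderiv ℝ u y‖ ^ 2
  have hstrauss : ∀ x ∈ {x | R < ‖x‖}, ‖x‖ ^ (d - 2) * ‖u x‖ ^ 2 ≤ 2 / c * √A * √B :=
    fun x hx => by
      have := pow_mul_sq_norm_le_of_radial volume (by omega) hu hrad hlim hR hDu hu_div hx
      rw [hdim] at this
      rw [mul_assoc, div_mul_eq_mul_div, le_div_iff₀' hc]
      linarith
  have hinterp := setIntegral_rpow_le_of_pow_mul_sq_le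
    (measurableSet_lt measurable_const measurable_norm) (by omega) (fun x hx => hR.trans_lt hx)
    hstrauss hu_div
  set t : ℝ := 2 / ((d : ℝ) - 2)
  have hd2 : ((d - 2 : ℕ) : ℝ) = d - 2 := by push_cast [Nat.cast_sub (by omega : 2 ≤ d)]; ring
  have hd2pos : (0 : ℝ) < d - 2 := by rw [← hd2]; exact_mod_cast (by omega : 0 < d - 2)
  have hA : √A ^ (2 : ℝ) = A := by
    rw [Real.rpow_two, Real.sq_sqrt (integral_nonneg fun y => by positivity)]
  rw [hd2] at hinterp
  rw [show 2 * (d : ℝ) / (d - 2) = 2 + 4 / (d - 2) by field_simp; ring,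
    show (2 * (d : ℝ) - 2) / (d - 2) = 2 + t by simp only [t]; field_simp; ring,
    Real.rpow_add' (Real.sqrt_nonneg A) (by positivity), hA]
  calc _ ≤ (2 / c * √A * √B) ^ t * A := hinterp
    _ = _ := by rw [Real.mul_rpow (by positivity) (by positivity),
      Real.mul_rpow (by positivity) (by positivity)]; ring
end

section
/- Let μ > 0 and suppose real-valued functions λ₊, λ₋ of τ satisfy the ODEs ∂_τλ₊ = μλ₊ + O(λ₁²) and ∂_τλ₋ = −μλ₋ + O(λ₁²) with λ₁ = (λ₊+λ₋)/2, where initially λ₊(0) ≥ |λ₁(0)|/2 > 0, λ₋(0) ≥ 0, and |λ₁(0)| = R̃ is small. Then as long as |λ₁(τ)| ≤ 2R̃e^{μτ} remains small, one has |λ₊(τ) − e^{μτ}λ₊(0)| ≲ R̃²e^{2μτ} and |λ₋(τ) − e^{−μτ}λ₋(0)| ≲ R̃²e^{2μτ}; consequently |λ₁(τ)| ∼ R̃e^{μτ}. -/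
/-!
Variation of constants: `e^{-cτ} f(τ)` has derivative `e^{-cτ} (f' - c f)`, so a source of size
`C λ₁² ≤ C (r e^{μτ})²` moves it by at most `C r² e^{(2μ-c)τ} / (2μ - c)`. With `c = ±μ` and
`r = 2R̃` this gives both deviation bounds. The deviation is quadratic in `R̃ e^{μτ}`, while
`λ₊(0) ≥ R̃/2` and `λ₋(0) ≥ 0`, so as long as `R̃ e^{μτ}` is small it cannot cancel the leading
term and `λ₁(τ) ≥ R̃ e^{μτ} / 8`.
-/

open Real Set

theorem hasDerivAt_exp_const_mul (a s : ℝ) :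
    HasDerivAt (fun x => exp (a * x)) (a * exp (a * s)) s := by
  simpa [mul_comm] using ((hasDerivAt_id s).const_mul a).exp

section

variable {E : Type*} [NormedAddCommGroup E] [NormedSpace ℝ E]

theorem norm_sub_le_of_norm_deriv_le_mul_exp {f f' : ℝ → E} {a B τ : ℝ} (ha : a ≠ 0)
    (hf : ∀ s, HasDerivAt f (f' s) s) (hτ : 0 ≤ τ)
    (bound : ∀ s ∈ Icc 0 τ, ‖f' s‖ ≤ B * exp (a * s)) :
    ‖f τ - f 0‖ ≤ B / a * (exp (a * τ) - 1) := by
  have hmajorant (s : ℝ) : HasDerivAt (fun x => B / a * (exp (a * x) - 1)) (B * exp (a * s)) s := by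
    refine (((hasDerivAt_exp_const_mul a s).sub_const 1).const_mul (B / a)).congr_deriv ?_
    field_simp
  refine image_norm_le_of_norm_deriv_right_le_deriv_boundary (f := fun x => f x - f 0)
    (fun x _ => ((hf x).sub_const (f 0)).continuousAt.continuousWithinAt)
    (fun x _ => ((hf x).sub_const (f 0)).hasDerivWithinAt) (by simp) hmajorant
    (fun x hx => bound x (Ico_subset_Icc_self hx)) ⟨hτ, le_rfl⟩

theorem norm_sub_exp_smul_le_of_norm_deriv_sub_smul_le {f f' : ℝ → E} {b c K τ : ℝ}
    (hbc : b ≠ c) (hf : ∀ s, HasDerivAt f (f' s) s) (hτ : 0 ≤ τ)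
    (bound : ∀ s ∈ Icc 0 τ, ‖f' s - c • f s‖ ≤ K * exp (b * s)) :
    ‖f τ - exp (c * τ) • f 0‖ ≤ K / (b - c) * (exp (b * τ) - exp (c * τ)) := by
  have hF (s : ℝ) : HasDerivAt (fun x => exp (-c * x) • f x)
      (exp (-c * s) • (f' s - c • f s)) s := by
    refine ((hasDerivAt_exp_const_mul (-c) s).smul (hf s)).congr_deriv ?_
    module
  have key := norm_sub_le_of_norm_deriv_le_mul_exp (sub_ne_zero.mpr hbc) hF hτ fun s hs => by
    rw [norm_smul, Real.norm_of_nonneg (exp_pos _).le]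
    calc exp (-c * s) * ‖f' s - c • f s‖ ≤ exp (-c * s) * (K * exp (b * s)) :=
          mul_le_mul_of_nonneg_left (bound s hs) (exp_pos _).le
      _ = K * exp ((b - c) * s) := by rw [sub_mul, sub_eq_add_neg, exp_add]; ring_nf
  have hscale :
      f τ - exp (c * τ) • f 0 = exp (c * τ) • (exp (-c * τ) • f τ - exp (-c * 0) • f 0) := by
    rw [smul_sub, smul_smul, ← exp_add]; simp
  rw [hscale, norm_smul, Real.norm_of_nonneg (exp_pos _).le]
  calc exp (c * τ) * ‖exp (-c * τ) • f τ - exp (-c * 0) • f 0‖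
      ≤ exp (c * τ) * (K / (b - c) * (exp ((b - c) * τ) - 1)) :=
        mul_le_mul_of_nonneg_left key (exp_pos _).le
    _ = K / (b - c) * (exp (b * τ) - exp (c * τ)) := by
        rw [sub_mul, exp_sub]; field_simp

end

theorem abs_sub_exp_mul_le_of_abs_deriv_sub_mul_le_sq {f g : ℝ → ℝ} {c μ C r τ : ℝ} (hμ : 0 < μ)
    (hc : c ≤ μ) (hC : 0 ≤ C) (hf : Differentiable ℝ f) (hτ : 0 ≤ τ)
    (hfg : ∀ s ∈ Icc 0 τ, |deriv f s - c * f s| ≤ C * g s ^ 2)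
    (hg : ∀ s ∈ Icc 0 τ, |g s| ≤ r * exp (μ * s)) :
    |f τ - exp (c * τ) * f 0| ≤ C * r ^ 2 / μ * exp (2 * μ * τ) := by
  have hsource : ∀ s ∈ Icc 0 τ, ‖deriv f s - c • f s‖ ≤ C * r ^ 2 * exp (2 * μ * s) := by
    intro s hs
    obtain ⟨hlower, hupper⟩ := abs_le.mp (hg s hs)
    calc ‖deriv f s - c • f s‖ ≤ C * g s ^ 2 := hfg s hs
      _ ≤ C * (r * exp (μ * s)) ^ 2 := mul_le_mul_of_nonneg_left (sq_le_sq' hlower hupper) hC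
      _ = C * r ^ 2 * exp (2 * μ * s) := by rw [mul_pow, ← exp_nat_mul]; ring_nf
  have h := norm_sub_exp_smul_le_of_norm_deriv_sub_smul_le (by linarith : c < 2 * μ).ne'
    (fun s => (hf s).hasDerivAt) hτ hsource
  simp only [Real.norm_eq_abs, smul_eq_mul] at h
  have hK : 0 ≤ C * r ^ 2 / (2 * μ - c) := div_nonneg (by positivity) (by linarith)
  calc _ ≤ C * r ^ 2 / (2 * μ - c) * (exp (2 * μ * τ) - exp (c * τ)) := h
    _ ≤ C * r ^ 2 / (2 * μ - c) * exp (2 * μ * τ) := by nlinarith [exp_pos (c * τ)]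
    _ ≤ C * r ^ 2 / μ * exp (2 * μ * τ) := by gcongr; linarith

/-- Hyperbolic growth estimate for the eigenmode coefficients near the ground
state: if `∂_τλ₊ = μλ₊ + O(λ₁²)`, `∂_τλ₋ = −μλ₋ + O(λ₁²)` with
`λ₁ = (λ₊+λ₋)/2`, `λ₊(0) ≥ |λ₁(0)|/2 > 0`, `λ₋(0) ≥ 0`, and `R̃ = |λ₁(0)|` is
small, then as long as `|λ₁(τ)| ≤ 2R̃e^{μτ}` remains small one has
`|λ₊(τ) − e^{μτ}λ₊(0)| ≲ R̃²e^{2μτ}`, `|λ₋(τ) − e^{−μτ}λ₋(0)| ≲ R̃²e^{2μτ}`,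
and consequently `|λ₁(τ)| ∼ R̃e^{μτ}`. -/
theorem stmt19 (μ C₀ : ℝ) (hμ : 0 < μ) (hC₀ : 0 < C₀) :
    ∃ ε₀ C₁ c₂ C₃ : ℝ, 0 < ε₀ ∧ 0 < C₁ ∧ 0 < c₂ ∧ 0 < C₃ ∧
      ∀ (lp lm : ℝ → ℝ), Differentiable ℝ lp → Differentiable ℝ lm →
        (∀ τ : ℝ, |deriv lp τ - μ * lp τ| ≤ C₀ * ((lp τ + lm τ) / 2) ^ 2) →
        (∀ τ : ℝ, |deriv lm τ + μ * lm τ| ≤ C₀ * ((lp τ + lm τ) / 2) ^ 2) →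
        ∀ Rt : ℝ, Rt = |(lp 0 + lm 0) / 2| →
          |(lp 0 + lm 0) / 2| / 2 ≤ lp 0 →
          0 < |(lp 0 + lm 0) / 2| →
          0 ≤ lm 0 →
          Rt ≤ ε₀ →
          ∀ T : ℝ, 0 ≤ T →
            (∀ τ ∈ Set.Icc (0 : ℝ) T,
              |(lp τ + lm τ) / 2| ≤ 2 * Rt * Real.exp (μ * τ) ∧
              2 * Rt * Real.exp (μ * τ) ≤ ε₀) →
            ∀ τ ∈ Set.Icc (0 : ℝ) T,
              |lp τ - Real.exp (μ * τ) * lp 0| ≤ C₁ * Rt ^ 2 * Real.exp (2 * μ * τ) ∧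
              |lm τ - Real.exp (-(μ * τ)) * lm 0| ≤ C₁ * Rt ^ 2 * Real.exp (2 * μ * τ) ∧
              c₂ * Rt * Real.exp (μ * τ) ≤ |(lp τ + lm τ) / 2| ∧
              |(lp τ + lm τ) / 2| ≤ C₃ * Rt * Real.exp (μ * τ) := by
  refine ⟨μ / (16 * C₀), 4 * C₀ / μ, 1 / 8, 2, by positivity, by positivity, by norm_num,
    by norm_num, ?_⟩
  intro lp lm hlp hlm hp hm Rt hRt hlp0 hpos hlm0 _ T _ hboot τ hτ
  have hRt0 : 0 < Rt := hRt ▸ hpos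
  have hgrowth : ∀ s ∈ Icc 0 τ, |(lp s + lm s) / 2| ≤ 2 * Rt * exp (μ * s) := fun s hs =>
    (hboot s (Icc_subset_Icc_right hτ.2 hs)).1
  have hA : |lp τ - exp (μ * τ) * lp 0| ≤ 4 * C₀ / μ * Rt ^ 2 * exp (2 * μ * τ) :=
    (abs_sub_exp_mul_le_of_abs_deriv_sub_mul_le_sq hμ le_rfl hC₀.le hlp hτ.1 (fun s _ => hp s)
      hgrowth).trans_eq (by ring)
  have hB : |lm τ - exp (-(μ * τ)) * lm 0| ≤ 4 * C₀ / μ * Rt ^ 2 * exp (2 * μ * τ) := by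
    have := abs_sub_exp_mul_le_of_abs_deriv_sub_mul_le_sq hμ (by linarith : -μ ≤ μ) hC₀.le hlm hτ.1
      (fun s _ => by simpa only [neg_mul, sub_neg_eq_add] using hm s) hgrowth
    rw [neg_mul] at this
    exact this.trans_eq (by ring)
  refine ⟨hA, hB, ?_, (hboot τ hτ).1⟩
  set e := exp (μ * τ)
  have hsmall : 4 * C₀ / μ * Rt * e ≤ 1 / 8 := by
    have := (hboot τ hτ).2
    rw [le_div_iff₀ (by positivity)] at this
    field_simp
    linarith
  have hquad : 4 * C₀ / μ * Rt ^ 2 * exp (2 * μ * τ) ≤ Rt * e / 8 := by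
    rw [show 2 * μ * τ = μ * τ + μ * τ by ring, exp_add]
    nlinarith [mul_le_mul_of_nonneg_right hsmall (by positivity : 0 ≤ Rt * e)]
  have hlp : Rt * e / 2 ≤ e * lp 0 := by
    nlinarith [mul_le_mul_of_nonneg_left (hRt ▸ hlp0) (exp_pos (μ * τ)).le]
  have hlm : 0 ≤ exp (-(μ * τ)) * lm 0 := by positivity
  calc 1 / 8 * Rt * e ≤ (lp τ + lm τ) / 2 := by linarith [(abs_le.mp hA).1, (abs_le.mp hB).1]
    _ ≤ |(lp τ + lm τ) / 2| := le_abs_self _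
end
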